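/- Both the subspace of C_k(ω*,ω*) consisting of all restrictions to ω* of Stone–Čech extensions of injective maps ℕ → ℕ, and the subspace consisting of all restrictions to ω* of Stone–Čech extensions of finite-to-one maps ℕ → ℕ, are Baire spaces in the subspace topology. -/

import Mathlib

/-- `ω*`, the Stone–Čech remainder of the natural numbers. -/
abbrev OmegaStar : Type := {x : StoneCech ℕ // x ∉ Set.range stoneCechUnit}

/-- The Stone–Čech extension `βφ : StoneCech ℕ → StoneCech ℕ` of a map `φ : ℕ → ℕ`. -/
noncomputable def betaExtend (φ : ℕ → ℕ) : StoneCech ℕ → StoneCech ℕ :=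
  stoneCechExtend (continuous_stoneCechUnit.comp continuous_of_discreteTopology (f := φ))

/-- `f ∈ C(ω*, ω*)` is the restriction of `βφ` to `ω*`. -/
def IsRestrictionOfBetaExtend (φ : ℕ → ℕ) (f : C(OmegaStar, OmegaStar)) : Prop :=
  ∀ x : OmegaStar, betaExtend φ (x : StoneCech ℕ) = (f x : StoneCech ℕ)

/-!
Identify `StoneCech ℕ` with `Ultrafilter ℕ`, so that `ω*` is the space of nonprincipal
ultrafilters, with the clopen base `A* = {u | A ∈ u}`. If `f` is the restriction of `βφ` with `φ`
finite-to-one, then `f` maps `A*` into `B*` iff `φ '' A \ B` is finite, and the sets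
`{g | ∀ A ∈ L, g (A*) ⊆ (φ '' A)*}` with `L` finite form a neighbourhood base at `f`. A space with
a π-base of open sets in which every decreasing sequence has nonempty intersection is Baire. Along
a decreasing sequence of such neighbourhoods around `βψₙ`, the constraints "`φ '' A \ ψₙ '' A` is
finite" are consistent (if `⋂ A` is infinite then so is `⋂ ψₙ '' A`, as `ψ_N` nearly satisfies
them for the largest `N` involved), and a diagonal choice yields a strictly increasing, hence
injective, `φ` meeting all of them.
-/

open Filter Set Function Topology

lemma Ultrafilter.continuous_map {α β : Type*} (m : α → β) : Continuous (Ultrafilter.map m) := by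
  refine ultrafilterBasis_is_basis.continuous_iff.2 ?_
  rintro _ ⟨B, rfl⟩
  exact ultrafilter_isOpen_basic (m ⁻¹' B)

section StoneCechUltrafilter

variable {α : Type*} [TopologicalSpace α] [DiscreteTopology α]

noncomputable def stoneCechHomeomorphUltrafilter : StoneCech α ≃ₜ Ultrafilter α where
  toFun := stoneCechExtend (continuous_of_discreteTopology (f := (pure : α → Ultrafilter α)))
  invFun := Ultrafilter.extend stoneCechUnit
  left_inv := by
    refine congrFun (stoneCech_hom_ext ((continuous_ultrafilter_extend _).comp
      (continuous_stoneCechExtend _)) continuous_id (funext fun a => ?_))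
    simp [stoneCechExtend_stoneCechUnit, ultrafilter_extend_pure]
  right_inv := by
    refine congrFun (denseRange_pure.equalizer ((continuous_stoneCechExtend _).comp
      (continuous_ultrafilter_extend _)) continuous_id (funext fun a => ?_))
    simp [stoneCechExtend_stoneCechUnit, ultrafilter_extend_pure]
  continuous_toFun := continuous_stoneCechExtend _
  continuous_invFun := continuous_ultrafilter_extend _

@[simp]
lemma stoneCechHomeomorphUltrafilter_stoneCechUnit (a : α) :
    stoneCechHomeomorphUltrafilter (stoneCechUnit a) = pure a :=
  stoneCechExtend_stoneCechUnit continuous_of_discreteTopology a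

lemma notMem_range_stoneCechUnit_iff {x : StoneCech α} :
    x ∉ range stoneCechUnit ↔ ↑(stoneCechHomeomorphUltrafilter x) ≤ (cofinite : Filter α) := by
  rw [← not_iff_not, not_not]
  constructor
  · rintro ⟨a, rfl⟩ h
    simpa using h (finite_singleton a).compl_mem_cofinite
  · intro h
    obtain ⟨a, ha⟩ := (stoneCechHomeomorphUltrafilter x).le_cofinite_or_eq_pure.resolve_left h
    exact ⟨a, stoneCechHomeomorphUltrafilter.injective (by simp [ha])⟩

end StoneCechUltrafilter

lemma stoneCechHomeomorphUltrafilter_betaExtend (φ : ℕ → ℕ) (x : StoneCech ℕ) :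
    stoneCechHomeomorphUltrafilter (betaExtend φ x) = (stoneCechHomeomorphUltrafilter x).map φ := by
  refine congrFun (stoneCech_hom_ext (g₁ := stoneCechHomeomorphUltrafilter ∘ betaExtend φ)
    (stoneCechHomeomorphUltrafilter.continuous.comp (continuous_stoneCechExtend _))
    ((Ultrafilter.continuous_map φ).comp stoneCechHomeomorphUltrafilter.continuous)
    (funext fun n => ?_)) x
  simp [betaExtend, stoneCechExtend_stoneCechUnit]

namespace OmegaStar

noncomputable def ultrafilter (x : OmegaStar) : Ultrafilter ℕ := stoneCechHomeomorphUltrafilter x.1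

lemma ultrafilter_le_cofinite (x : OmegaStar) : ↑x.ultrafilter ≤ (cofinite : Filter ℕ) :=
  notMem_range_stoneCechUnit_iff.1 x.2

lemma isInducing_ultrafilter : IsInducing ultrafilter :=
  stoneCechHomeomorphUltrafilter.isInducing.comp IsInducing.subtypeVal

lemma ultrafilter_injective : Injective ultrafilter :=
  stoneCechHomeomorphUltrafilter.injective.comp Subtype.val_injective

lemma exists_ultrafilter_eq {u : Ultrafilter ℕ} (hu : ↑u ≤ (cofinite : Filter ℕ)) :
    ∃ x : OmegaStar, x.ultrafilter = u :=
  ⟨⟨stoneCechHomeomorphUltrafilter.symm u, notMem_range_stoneCechUnit_iff.2 (by simpa using hu)⟩,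
    stoneCechHomeomorphUltrafilter.apply_symm_apply u⟩

instance : CompactSpace OmegaStar := by
  have hclosed : IsClosed {x : StoneCech ℕ | x ∉ range stoneCechUnit} := by
    have : {x : StoneCech ℕ | x ∉ range stoneCechUnit} =
        stoneCechHomeomorphUltrafilter ⁻¹' ⋂ n : ℕ, {u | {n}ᶜ ∈ u} := by
      ext x
      rw [mem_ofPred_eq, notMem_range_stoneCechUnit_iff, le_cofinite_iff_compl_singleton_mem]
      simp
    rw [this]
    exact (isClosed_iInter fun n => ultrafilter_isClosed_basic _).preimage
      stoneCechHomeomorphUltrafilter.continuous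
  exact isCompact_iff_compactSpace.1 hclosed.isCompact

def basicSet (A : Set ℕ) : Set OmegaStar := {x | A ∈ x.ultrafilter}

lemma isClopen_basicSet (A : Set ℕ) : IsClopen (basicSet A) :=
  ⟨(ultrafilter_isClosed_basic A).preimage isInducing_ultrafilter.continuous,
    (ultrafilter_isOpen_basic A).preimage isInducing_ultrafilter.continuous⟩

lemma isTopologicalBasis_basicSet : TopologicalSpace.IsTopologicalBasis (range basicSet) := by
  convert ultrafilterBasis_is_basis.isInducing isInducing_ultrafilter
  ext s
  simp [ultrafilterBasis, basicSet, eq_comm]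

@[simp]
lemma basicSet_empty : basicSet ∅ = ∅ := by
  simp [basicSet]

lemma basicSet_union (A B : Set ℕ) : basicSet (A ∪ B) = basicSet A ∪ basicSet B := by
  ext x
  exact Ultrafilter.union_mem_iff

lemma basicSet_sdiff (A B : Set ℕ) : basicSet (A \ B) = basicSet A \ basicSet B := by
  ext x
  exact Ultrafilter.sdiff_mem_iff _

lemma notMem_ultrafilter_of_finite (x : OmegaStar) {A : Set ℕ} (hA : A.Finite) :
    A ∉ x.ultrafilter :=
  fun hx => Ultrafilter.compl_notMem_iff.2 hx (x.ultrafilter_le_cofinite hA.compl_mem_cofinite)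

lemma basicSet_eq_empty_iff {A : Set ℕ} : basicSet A = ∅ ↔ A.Finite := by
  refine ⟨fun h => not_not.1 fun hA => ?_, fun hA => eq_empty_of_forall_notMem fun x =>
    x.notMem_ultrafilter_of_finite hA⟩
  have := Set.Infinite.cofinite_inf_principal_neBot hA
  have hle := Ultrafilter.of_le (cofinite ⊓ 𝓟 A)
  obtain ⟨x, hx⟩ := exists_ultrafilter_eq (hle.trans inf_le_left)
  exact h.subset (show A ∈ x.ultrafilter from hx ▸ le_principal_iff.1 (hle.trans inf_le_right))

lemma exists_basicSet_between {K O : Set OmegaStar} (hK : IsCompact K) (hO : IsOpen O)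
    (hKO : K ⊆ O) : ∃ A, K ⊆ basicSet A ∧ basicSet A ⊆ O := by
  refine hK.induction_on (p := fun s => ∃ A, s ⊆ basicSet A ∧ basicSet A ⊆ O) ⟨∅, by simp⟩
    ?_ ?_ fun x hx => ?_
  · rintro s t hst ⟨A, htA, hAO⟩
    exact ⟨A, hst.trans htA, hAO⟩
  · rintro s t ⟨A, hsA, hAO⟩ ⟨B, htB, hBO⟩
    exact ⟨A ∪ B, basicSet_union A B ▸ union_subset_union hsA htB,
      basicSet_union A B ▸ union_subset hAO hBO⟩
  · obtain ⟨_, ⟨A, rfl⟩, hxA, hAO⟩ :=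
      isTopologicalBasis_basicSet.exists_subset_of_mem_open (hKO hx) hO
    exact ⟨basicSet A, mem_nhdsWithin_of_mem_nhds ((isClopen_basicSet A).isOpen.mem_nhds hxA),
      A, subset_rfl, hAO⟩

end OmegaStar

section FiniteToOne

variable {α β : Type*} {φ : α → β}

lemma Set.Finite.preimage_of_tendsto_cofinite (hφ : Tendsto φ cofinite cofinite) {s : Set β}
    (hs : s.Finite) : (φ ⁻¹' s).Finite := by
  simpa using mem_cofinite.1 (hφ hs.compl_mem_cofinite)

lemma Set.finite_image_iff_of_tendsto_cofinite (hφ : Tendsto φ cofinite cofinite) {s : Set α} :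
    (φ '' s).Finite ↔ s.Finite :=
  ⟨fun h => (h.preimage_of_tendsto_cofinite hφ).subset (subset_preimage_image φ s),
    fun h => h.image φ⟩

end FiniteToOne

open OmegaStar

section Restriction

variable {φ : ℕ → ℕ} {f : C(OmegaStar, OmegaStar)}

noncomputable def betaExtendRestrict (φ : ℕ → ℕ) (hφ : Tendsto φ cofinite cofinite) :
    C(OmegaStar, OmegaStar) where
  toFun x := ⟨betaExtend φ x, notMem_range_stoneCechUnit_iff.2 <| by
    rw [stoneCechHomeomorphUltrafilter_betaExtend, Ultrafilter.coe_map]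
    exact (map_mono x.ultrafilter_le_cofinite).trans hφ⟩
  continuous_toFun := ((continuous_stoneCechExtend _).comp continuous_subtype_val).subtype_mk _

lemma isRestrictionOfBetaExtend_betaExtendRestrict (hφ : Tendsto φ cofinite cofinite) :
    IsRestrictionOfBetaExtend φ (betaExtendRestrict φ hφ) :=
  fun _ => rfl

namespace IsRestrictionOfBetaExtend

lemma ultrafilter_apply (hf : IsRestrictionOfBetaExtend φ f) (x : OmegaStar) :
    (f x).ultrafilter = x.ultrafilter.map φ := by
  rw [OmegaStar.ultrafilter, ← hf x, stoneCechHomeomorphUltrafilter_betaExtend]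
  rfl

lemma preimage_basicSet (hf : IsRestrictionOfBetaExtend φ f) (B : Set ℕ) :
    f ⁻¹' basicSet B = basicSet (φ ⁻¹' B) := by
  ext x
  simp [basicSet, hf.ultrafilter_apply]

lemma mapsTo_basicSet_iff (hf : IsRestrictionOfBetaExtend φ f) (hφ : Tendsto φ cofinite cofinite)
    {A B : Set ℕ} : MapsTo f (basicSet A) (basicSet B) ↔ (φ '' A \ B).Finite := by
  rw [← image_sdiff_preimage, finite_image_iff_of_tendsto_cofinite hφ, ← basicSet_eq_empty_iff,
    basicSet_sdiff, ← hf.preimage_basicSet, sdiff_eq_empty, mapsTo_iff_subset_preimage]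

lemma basicSet_image_subset_image (hf : IsRestrictionOfBetaExtend φ f) (A : Set ℕ) :
    basicSet (φ '' A) ⊆ f '' basicSet A := by
  intro x (hx : φ '' A ∈ x.ultrafilter)
  have hv : ↑(Ultrafilter.ofComapInfPrincipal hx) ≤ (cofinite : Filter ℕ) := by
    refine (Ultrafilter.ofComapInfPrincipal hx).le_cofinite_or_eq_pure.resolve_right ?_
    rintro ⟨a, ha⟩
    apply x.notMem_ultrafilter_of_finite (finite_singleton (φ a))
    rw [← Ultrafilter.ofComapInfPrincipal_eq_of_map hx, ha, Ultrafilter.map_pure]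
    exact mem_singleton _
  obtain ⟨y, hy⟩ := exists_ultrafilter_eq hv
  refine ⟨y, ?_, ultrafilter_injective ?_⟩
  · exact show A ∈ y.ultrafilter from hy ▸ Ultrafilter.ofComapInfPrincipal_mem hx
  · rw [hf.ultrafilter_apply, hy, Ultrafilter.ofComapInfPrincipal_eq_of_map]

lemma exists_basicSet_mapsTo (hf : IsRestrictionOfBetaExtend φ f) {K U : Set OmegaStar}
    (hK : IsCompact K) (hU : IsOpen U) (hfKU : MapsTo f K U) :
    ∃ A, ∀ g : C(OmegaStar, OmegaStar), MapsTo g (basicSet A) (basicSet (φ '' A)) →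
      MapsTo g K U := by
  obtain ⟨A, hKA, hAU⟩ := exists_basicSet_between hK (hU.preimage f.continuous) hfKU
  refine ⟨A, fun g hg x hx => ?_⟩
  obtain ⟨y, hyA, hy⟩ := hf.basicSet_image_subset_image A (hg (hKA hx))
  exact hy ▸ hAU hyA

end IsRestrictionOfBetaExtend

end Restriction

def cylinder (φ : ℕ → ℕ) (L : Finset (Set ℕ)) : Set C(OmegaStar, OmegaStar) :=
  {g | ∀ A ∈ L, MapsTo g (basicSet A) (basicSet (φ '' A))}

section Cylinder

variable {φ ψ : ℕ → ℕ} {f : C(OmegaStar, OmegaStar)}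

lemma isOpen_cylinder (φ : ℕ → ℕ) (L : Finset (Set ℕ)) : IsOpen (cylinder φ L) := by
  simp only [cylinder, ofPred_forall]
  exact isOpen_biInter_finset fun A _ => ContinuousMap.isOpen_setOfPred_mapsTo
    (isClopen_basicSet A).isClosed.isCompact (isClopen_basicSet _).isOpen

lemma betaExtendRestrict_mem_cylinder_iff (hψ : Tendsto ψ cofinite cofinite)
    {L : Finset (Set ℕ)} :
    betaExtendRestrict ψ hψ ∈ cylinder φ L ↔ ∀ A ∈ L, (ψ '' A \ φ '' A).Finite :=
  forall₂_congr fun _ _ => (isRestrictionOfBetaExtend_betaExtendRestrict hψ).mapsTo_basicSet_iff hψ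

lemma betaExtendRestrict_mem_cylinder (hφ : Tendsto φ cofinite cofinite) (L : Finset (Set ℕ)) :
    betaExtendRestrict φ hφ ∈ cylinder φ L :=
  (betaExtendRestrict_mem_cylinder_iff hφ).2 fun A _ => by simp

lemma IsRestrictionOfBetaExtend.exists_cylinder_subset (hf : IsRestrictionOfBetaExtend φ f)
    {W : Set C(OmegaStar, OmegaStar)} (hW : W ∈ 𝓝 f) : ∃ L, cylinder φ L ⊆ W := by
  classical
  obtain ⟨S, hS, hSf, hSW⟩ := ContinuousMap.mem_nhds_iff.1 hW
  choose! A hA using fun p (hp : p ∈ S) =>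
    hf.exists_basicSet_mapsTo (hSf _ _ hp).1 (hSf _ _ hp).2.1 (hSf _ _ hp).2.2
  exact ⟨hS.toFinset.image A, fun g hg => hSW fun K U hKU =>
    hA _ hKU g (hg _ (Finset.mem_image_of_mem _ (hS.mem_toFinset.2 hKU)))⟩

end Cylinder

lemma exists_strictMono_forall_mem (S : ℕ → Set ℕ) (hS : ∀ m, (S m).Infinite) :
    ∃ φ : ℕ → ℕ, StrictMono φ ∧ ∀ m, φ m ∈ S m := by
  choose next hnext_mem hnext_gt using fun m => (hS m).exists_gt
  let φ : ℕ → ℕ := fun m => Nat.rec (next 0 0) (fun m k => next (m + 1) k) m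
  refine ⟨φ, strictMono_nat_of_lt_succ fun m => hnext_gt (m + 1) (φ m), fun m => ?_⟩
  cases m
  · exact hnext_mem 0 0
  · exact hnext_mem _ _

/- `φ m` is taken in `⋂ C j` over the longest initial segment of the constraints `j` with `m ∈ A j`
for which this is still infinite. If `m ≥ k`, `m ∈ A k` and `φ m ∉ C k`, then that segment stops
before `k`, so `m` lies in `⋂ A j` over some `T ⊆ [0, k]` with `⋂ C j` over `T` finite; by `H`
there are only finitely many such `m`. -/
lemma exists_strictMono_image_sdiff_finite_nat (A C : ℕ → Set ℕ)
    (H : ∀ T : Finset ℕ, (⋂ k ∈ T, A k).Infinite → (⋂ k ∈ T, C k).Infinite) :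
    ∃ φ : ℕ → ℕ, StrictMono φ ∧ ∀ k, (φ '' A k \ C k).Finite := by
  classical
  let I : ℕ → ℕ → Finset ℕ := fun m n => (Finset.range n).filter (m ∈ A ·)
  let K : ℕ → ℕ := fun m => Nat.findGreatest (fun n => (⋂ j ∈ I m n, C j).Infinite) (m + 1)
  have hK : ∀ m, (⋂ j ∈ I m (K m), C j).Infinite := fun m =>
    Nat.findGreatest_spec (P := fun n => (⋂ j ∈ I m n, C j).Infinite) (Nat.zero_le _)
      (by simpa [I] using infinite_univ)
  obtain ⟨φ, hφ, hφC⟩ := exists_strictMono_forall_mem _ hK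
  refine ⟨φ, hφ, fun k => ?_⟩
  have hbad : {m | m ∈ A k ∧ φ m ∉ C k} ⊆ Iio k ∪
      ⋃ T ∈ (Finset.range (k + 1)).powerset.filter (fun T => ¬(⋂ j ∈ T, C j).Infinite),
        ⋂ j ∈ T, A j := by
    rintro m ⟨hmA, hmC⟩
    refine (lt_or_ge m k).imp id fun hkm => mem_iUnion₂.2 ⟨I m (k + 1), ?_, ?_⟩
    · have hKk : K m < k + 1 := by
        by_contra! h
        exact hmC (mem_iInter₂.1 (hφC m) k (by simpa [I] using ⟨by omega, hmA⟩))
      simpa [I, Finset.filter_subset] using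
        Nat.findGreatest_is_greatest hKk (by omega : k + 1 ≤ m + 1)
    · exact mem_iInter₂.2 fun j hj => (Finset.mem_filter.1 hj).2
  have hbad_finite : {m | m ∈ A k ∧ φ m ∉ C k}.Finite :=
    ((finite_Iio k).union (Finset.finite_toSet _ |>.biUnion fun T hT =>
      not_not.1 (mt (H T) (Finset.mem_filter.1 hT).2))).subset hbad
  refine (hbad_finite.image φ).subset ?_
  rintro _ ⟨⟨m, hm, rfl⟩, hmC⟩
  exact ⟨m, ⟨hm, hmC⟩, rfl⟩

lemma exists_strictMono_image_sdiff_finite {ι : Type*} [Countable ι] (A C : ι → Set ℕ)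
    (H : ∀ T : Finset ι, (⋂ i ∈ T, A i).Infinite → (⋂ i ∈ T, C i).Infinite) :
    ∃ φ : ℕ → ℕ, StrictMono φ ∧ ∀ i, (φ '' A i \ C i).Finite := by
  classical
  cases isEmpty_or_nonempty ι
  · exact ⟨id, strictMono_id, isEmptyElim⟩
  obtain ⟨e, he⟩ := exists_surjective_nat ι
  obtain ⟨φ, hφ, hfin⟩ := exists_strictMono_image_sdiff_finite_nat (A ∘ e) (C ∘ e) fun T hT => by
    simpa only [Finset.set_biInter_finset_image, comp_apply] using H (T.image e) (by
      simpa only [Finset.set_biInter_finset_image, comp_apply] using hT)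
  exact ⟨φ, hφ, he.forall.2 hfin⟩

lemma exists_strictMono_image_sdiff_finite_of_nested (ψ : ℕ → ℕ → ℕ)
    (hψ : ∀ n, Tendsto (ψ n) cofinite cofinite) (L : ℕ → Finset (Set ℕ))
    (hL : ∀ ⦃n m⦄, n ≤ m → ∀ A ∈ L n, (ψ m '' A \ ψ n '' A).Finite) :
    ∃ φ : ℕ → ℕ, StrictMono φ ∧ ∀ n, ∀ A ∈ L n, (φ '' A \ ψ n '' A).Finite := by
  obtain ⟨φ, hφ, hfin⟩ := exists_strictMono_image_sdiff_finite (ι := Σ n, L n)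
    (fun i => i.2) (fun i => ψ i.1 '' i.2) fun T hT => by
      let N := T.sup Sigma.fst
      have hN : ∀ i ∈ T, (ψ N '' i.2 \ ψ i.1 '' i.2).Finite := fun i hi =>
        hL (Finset.le_sup (f := Sigma.fst) hi) _ i.2.2
      have hinf : (ψ N '' ⋂ i ∈ T, (i.2 : Set ℕ)).Infinite :=
        mt (finite_image_iff_of_tendsto_cofinite (hψ N)).1 hT
      refine (hinf.sdiff (T.finite_toSet.biUnion hN)).mono ?_
      rintro _ ⟨⟨a, ha, rfl⟩, hbad⟩
      refine mem_iInter₂.2 fun i hi => not_not.1 fun hnot => hbad (mem_iUnion₂.2 ⟨i, hi, ?_⟩)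
      exact ⟨⟨a, mem_iInter₂.1 ha i hi, rfl⟩, hnot⟩
  exact ⟨φ, hφ, fun n A hA => hfin ⟨n, A, hA⟩⟩

theorem BaireSpace.of_piBase_of_nonempty_iInter {X ι : Type*} [TopologicalSpace X]
    (U : ι → Set X) (hU_open : ∀ i, IsOpen (U i))
    (hU_base : ∀ V, IsOpen V → V.Nonempty → ∃ i, U i ⊆ V)
    (hU_nonempty_iInter : ∀ q : ℕ → ι, Antitone (U ∘ q) → (⋂ n, U (q n)).Nonempty) :
    BaireSpace X := by
  refine ⟨fun D hD_open hD_dense => dense_iff_inter_open.2 fun V hV hV_ne => ?_⟩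
  have hU_nonempty (i : ι) : (U i).Nonempty :=
    (hU_nonempty_iInter (fun _ => i) antitone_const).mono (iInter_subset _ 0)
  have hstep (n : ℕ) (i : ι) : ∃ j, U j ⊆ U i ∩ D n :=
    hU_base _ ((hU_open i).inter (hD_open n))
      ((hD_dense n).inter_open_nonempty _ (hU_open i) (hU_nonempty i))
  choose next hnext using hstep
  obtain ⟨i₀, hi₀⟩ := hU_base V hV hV_ne
  let q : ℕ → ι := fun n => Nat.rec i₀ next n
  obtain ⟨x, hx⟩ := hU_nonempty_iInter q
    (antitone_nat_of_succ_le fun n => (hnext n (q n)).trans inter_subset_left)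
  rw [mem_iInter] at hx
  exact ⟨x, hi₀ (hx 0), mem_iInter.2 fun n => (hnext n (q n) (hx (n + 1))).2⟩

theorem baireSpace_setOf_isRestrictionOfBetaExtend (P : (ℕ → ℕ) → Prop)
    (hP_tendsto : ∀ φ, P φ → Tendsto φ cofinite cofinite)
    (hP_strictMono : ∀ φ, StrictMono φ → P φ) :
    BaireSpace {f : C(OmegaStar, OmegaStar) | ∃ φ, P φ ∧ IsRestrictionOfBetaExtend φ f} := by
  set S := {f : C(OmegaStar, OmegaStar) | ∃ φ, P φ ∧ IsRestrictionOfBetaExtend φ f}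
  have hmem (φ : ℕ → ℕ) (hφ : P φ) : betaExtendRestrict φ (hP_tendsto φ hφ) ∈ S :=
    ⟨φ, hφ, isRestrictionOfBetaExtend_betaExtendRestrict _⟩
  refine .of_piBase_of_nonempty_iInter
    (fun q : {φ // P φ} × Finset (Set ℕ) => ((↑) : S → _) ⁻¹' cylinder q.1 q.2)
    (fun q => (isOpen_cylinder _ _).preimage continuous_subtype_val) ?_ fun q hq => ?_
  · rintro V hV ⟨⟨f, φ, hφ, hf⟩, hfV⟩
    obtain ⟨W, hW, rfl⟩ := isOpen_induced_iff.1 hV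
    obtain ⟨L, hL⟩ := hf.exists_cylinder_subset (hW.mem_nhds hfV)
    exact ⟨(⟨φ, hφ⟩, L), fun g hg => hL hg⟩
  · have hψ (n : ℕ) : Tendsto (q n).1.1 cofinite cofinite := hP_tendsto _ (q n).1.2
    have hnested : ∀ ⦃n m⦄, n ≤ m → ∀ A ∈ (q n).2, ((q m).1.1 '' A \ (q n).1.1 '' A).Finite :=
      fun n m hnm => (betaExtendRestrict_mem_cylinder_iff (hψ m)).1 <| hq hnm
        (show (⟨_, hmem _ (q m).1.2⟩ : S) ∈ _ from betaExtendRestrict_mem_cylinder (hψ m) _)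
    obtain ⟨φ, hφ, hfin⟩ :=
      exists_strictMono_image_sdiff_finite_of_nested _ hψ (fun n => (q n).2) hnested
    have hPφ := hP_strictMono φ hφ
    exact ⟨⟨_, hmem φ hPφ⟩, mem_iInter.2 fun n =>
      (betaExtendRestrict_mem_cylinder_iff (hP_tendsto φ hPφ)).2 (hfin n)⟩

/-- Both the subspace of `C_k(ω*, ω*)` of restrictions of Stone–Čech extensions of injective
maps `ℕ → ℕ`, and the subspace of restrictions of Stone–Čech extensions of finite-to-one maps
`ℕ → ℕ`, are Baire spaces. -/
theorem baireSpace_injective_and_finiteToOne_extensions :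
    BaireSpace {f : C(OmegaStar, OmegaStar) |
        ∃ φ : ℕ → ℕ, Function.Injective φ ∧ IsRestrictionOfBetaExtend φ f} ∧
    BaireSpace {f : C(OmegaStar, OmegaStar) |
        ∃ φ : ℕ → ℕ, (∀ m : ℕ, (φ ⁻¹' {m}).Finite) ∧ IsRestrictionOfBetaExtend φ f} :=
  ⟨baireSpace_setOf_isRestrictionOfBetaExtend _ (fun _ hφ => hφ.tendsto_cofinite)
      fun _ hφ => hφ.injective,
    baireSpace_setOf_isRestrictionOfBetaExtend _
      (fun _ hφ => Tendsto.cofinite_of_finite_preimage_singleton fun m => (hφ m).to_subtype)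
      fun _ hφ _ => (subsingleton_singleton.preimage hφ.injective).finite⟩
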